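/- arXiv:1703.00709 — 6 statements merged into one kernel-verified Lean document; each statement's English description precedes it below -/
import Mathlib

section
/- Let g, g' be distinct true twin vertices of G₂ (i.e., N[g] = N[g']) and let v be a vertex of G₁. Then (v,g) and (v,g') are true twins in G₁*G₂ if and only if v is a dominating vertex of G₁ (adjacent to all other vertices). -/
/-- The co-normal product of two simple graphs: distinct vertices are adjacent
iff the first coordinates are adjacent or the second coordinates are adjacent. -/
def conormal {α β : Type*} (G : SimpleGraph α) (H : SimpleGraph β) :
    SimpleGraph (α × β) where
  Adj x y := x ≠ y ∧ (G.Adj x.1 y.1 ∨ H.Adj x.2 y.2)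
  symm := ⟨fun x y ⟨hne, h⟩ => ⟨hne.symm, h.imp (·.symm) (·.symm)⟩⟩
  loopless := ⟨fun x ⟨h, _⟩ => h rfl⟩

/-- The closed neighborhood of a vertex. -/
def closedNbhd {V : Type*} (G : SimpleGraph V) (v : V) : Set V :=
  insert v (G.neighborSet v)

lemma mem_closedNbhd_iff {V : Type*} (G : SimpleGraph V) (x y : V) :
    x ∈ closedNbhd G y ↔ x = y ∨ G.Adj y x := by
  simp [closedNbhd, Set.mem_insert_iff]

theorem conormal_trueTwins_iff_dominating {α β : Type*}
    (G₁ : SimpleGraph α) (G₂ : SimpleGraph β) (v : α) (g g' : β)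
    (hgg' : g ≠ g') (htwin : closedNbhd G₂ g = closedNbhd G₂ g') :
    closedNbhd (conormal G₁ G₂) (v, g) = closedNbhd (conormal G₁ G₂) (v, g') ↔
      ∀ w : α, w ≠ v → G₁.Adj v w := by
  have ht : ∀ b, (b = g ∨ G₂.Adj g b) ↔ (b = g' ∨ G₂.Adj g' b) := by
    intro b
    have := Set.ext_iff.mp htwin b
    simpa [mem_closedNbhd_iff] using this
  have hgadj : G₂.Adj g g' := by
    rcases (ht g').mpr (Or.inl rfl) with h | h
    · exact absurd h.symm hgg'
    · exact h
  constructor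
  · intro h w hw
    have hmem : (w, g') ∈ closedNbhd (conormal G₁ G₂) (v, g) := by
      simp only [mem_closedNbhd_iff]
      exact Or.inr ⟨fun he => hw (congrArg Prod.fst he).symm, Or.inr hgadj⟩
    rw [h] at hmem; rw [mem_closedNbhd_iff] at hmem
    rcases hmem with he | ⟨_, hadj | hadj⟩
    · exact absurd (congrArg Prod.fst he) hw
    · exact hadj
    · exact absurd hadj (G₂.irrefl)
  · intro hdom
    ext x
    obtain ⟨a, b⟩ := x
    simp only [mem_closedNbhd_iff]
    constructor
    · rintro (he | ⟨hne, hadj⟩)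
      · obtain ⟨rfl, rfl⟩ := Prod.mk.injEq .. ▸ he
        exact Or.inr ⟨fun h2 => hgg' (congrArg Prod.snd h2).symm, Or.inr hgadj.symm⟩
      · by_cases hab : (a, b) = (v, g')
        · exact Or.inl hab
        · refine Or.inr ⟨fun h2 => hab h2.symm, ?_⟩
          rcases hadj with ha | hb
          · exact Or.inl ha
          · rcases (ht b).mp (Or.inr hb) with rfl | hb'
            · exact Or.inl (hdom a (fun h2 => hab (by rw [h2])))
            · exact Or.inr hb'
    · rintro (he | ⟨hne, hadj⟩)
      · obtain ⟨rfl, rfl⟩ := Prod.mk.injEq .. ▸ he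
        exact Or.inr ⟨fun h2 => hgg' (congrArg Prod.snd h2), Or.inr hgadj⟩
      · by_cases hab : (a, b) = (v, g)
        · exact Or.inl hab
        · refine Or.inr ⟨fun h2 => hab h2.symm, ?_⟩
          rcases hadj with ha | hb
          · exact Or.inl ha
          · rcases (ht b).mpr (Or.inr hb) with rfl | hb'
            · exact Or.inl (hdom a (fun h2 => hab (by rw [h2])))
            · exact Or.inr hb'
end

section
/- Let v be a dominating vertex of G₁ and ψ an automorphism of G₂. The map λ on V(G₁*G₂) defined by λ(v,h) = (v, ψ(h)) for all h ∈ V(G₂), and λ(g,h) = (g,h) whenever g ≠ v, is an automorphism of the co-normal product G₁*G₂. -/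
theorem conormal_aut_of_dominating {α β : Type*} [DecidableEq α]
    (G₁ : SimpleGraph α) (G₂ : SimpleGraph β) (v : α)
    (hv : ∀ w : α, w ≠ v → G₁.Adj v w) (ψ : G₂ ≃g G₂) :
    ∃ lam : conormal G₁ G₂ ≃g conormal G₁ G₂,
      ∀ p : α × β, lam p = if p.1 = v then (v, ψ p.2) else p := by
  refine ⟨⟨⟨fun p => if p.1 = v then (v, ψ p.2) else p,
    fun p => if p.1 = v then (v, ψ.symm p.2) else p, ?_, ?_⟩, ?_⟩, fun p => rfl⟩
  · intro p
    by_cases h : p.1 = v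
    · simp only [h, if_pos]
      simp
      exact Prod.ext h.symm rfl
    · simp only [if_neg h]
  · intro p
    by_cases h : p.1 = v
    · simp only [h, if_pos]
      simp
      exact Prod.ext h.symm rfl
    · simp only [if_neg h]
  · rintro ⟨a1, a2⟩ ⟨b1, b2⟩
    show (conormal G₁ G₂).Adj _ _ ↔ (conormal G₁ G₂).Adj _ _
    beta_reduce
    by_cases ha : a1 = v <;> by_cases hb : b1 = v
    · subst ha; subst hb
      simp only [Equiv.coe_fn_mk, if_pos rfl]
      simp [conormal, Prod.ext_iff, ψ.map_rel_iff]
    · subst ha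
      simp only [Equiv.coe_fn_mk, if_pos rfl, if_neg hb]
      constructor <;> intro _ <;>
        exact ⟨fun hh => hb (congrArg Prod.fst hh).symm, Or.inl (hv b1 hb)⟩
    · subst hb
      simp only [Equiv.coe_fn_mk, if_pos rfl, if_neg ha]
      constructor <;> intro _ <;>
        exact ⟨fun hh => ha (congrArg Prod.fst hh), Or.inl (hv a1 ha).symm⟩
    · simp only [Equiv.coe_fn_mk, if_neg ha, if_neg hb]
end

section
/- Let u ∈ V(G₁) be non-dominating and let ψ be a non-identity automorphism of G₂. The map λ on V(G₁*G₂) defined by λ(u,h) = (u, ψ(h)) for all h ∈ V(G₂) and λ(g,h) = (g,h) for g ≠ u, is an automorphism of G₁*G₂ if and only if for every h ∈ V(G₂), h and ψ(h) are false twins in G₂ (i.e., N(h) = N(ψ(h))). -/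
section FiberTwist

variable {α β : Type*}

theorem conormal_adj_iff {G₁ : SimpleGraph α} {G₂ : SimpleGraph β} {x y : α × β} :
    (conormal G₁ G₂).Adj x y ↔ G₁.Adj x.1 y.1 ∨ G₂.Adj x.2 y.2 := by
  refine ⟨And.right, fun h => ⟨?_, h⟩⟩
  rintro rfl
  exact h.elim (G₁.loopless.irrefl _) (G₂.loopless.irrefl _)

theorem SimpleGraph.adj_apply_left_iff_of_neighborSet_eq {G : SimpleGraph β} {σ : β → β}
    (hσ : ∀ b, G.neighborSet (σ b) = G.neighborSet b) (a b : β) :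
    G.Adj (σ a) b ↔ G.Adj a b := by
  simpa using Set.ext_iff.mp (hσ a) b

variable [DecidableEq α]

def fiberTwist (u : α) (σ : β ≃ β) : (α × β) ≃ (α × β) :=
  Equiv.prodShear (Equiv.refl α) fun a => if a = u then σ else Equiv.refl β

theorem fiberTwist_apply (u : α) (σ : β ≃ β) (p : α × β) :
    fiberTwist u σ p = if p.1 = u then (u, σ p.2) else p := by
  obtain ⟨a, b⟩ := p
  by_cases ha : a = u
  · subst ha; simp [fiberTwist]
  · simp [fiberTwist, ha]

theorem conormal_adj_fiberTwist_iff (G₁ : SimpleGraph α) {G₂ : SimpleGraph β} (u : α)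
    {σ : β ≃ β} (hσ : ∀ b, G₂.neighborSet (σ b) = G₂.neighborSet b) (x y : α × β) :
    (conormal G₁ G₂).Adj (fiberTwist u σ x) (fiberTwist u σ y) ↔ (conormal G₁ G₂).Adj x y := by
  have hl := G₂.adj_apply_left_iff_of_neighborSet_eq hσ
  have hr : ∀ a b, G₂.Adj a (σ b) ↔ G₂.Adj a b := fun a b => by
    rw [G₂.adj_comm, hl, G₂.adj_comm]
  obtain ⟨a, b⟩ := x
  obtain ⟨a', b'⟩ := y
  by_cases ha : a = u <;> by_cases ha' : a' = u <;>
    simp [fiberTwist_apply, conormal_adj_iff, ha, ha', hl, hr]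

def conormalFiberTwist (G₁ : SimpleGraph α) {G₂ : SimpleGraph β} (u : α) {σ : β ≃ β}
    (hσ : ∀ b, G₂.neighborSet (σ b) = G₂.neighborSet b) : conormal G₁ G₂ ≃g conormal G₁ G₂ :=
  ⟨fiberTwist u σ, conormal_adj_fiberTwist_iff G₁ u hσ _ _⟩

theorem neighborSet_eq_of_conormal_adj_fiberTwist_iff {G₁ : SimpleGraph α} {G₂ : SimpleGraph β}
    {u w : α} (hwu : w ≠ u) (hnadj : ¬ G₁.Adj u w) {σ : β ≃ β}
    (hσ : ∀ x y, (conormal G₁ G₂).Adj (fiberTwist u σ x) (fiberTwist u σ y) ↔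
      (conormal G₁ G₂).Adj x y) (b : β) :
    G₂.neighborSet (σ b) = G₂.neighborSet b := by
  ext b'
  simpa [fiberTwist_apply, conormal_adj_iff, hwu, hnadj] using hσ (u, b) (w, b')

end FiberTwist

theorem conormal_aut_nondominating_iff_falseTwins_general {α β : Type*} [DecidableEq α]
    (G₁ : SimpleGraph α) (G₂ : SimpleGraph β) (u : α)
    (hu : ∃ w : α, w ≠ u ∧ ¬ G₁.Adj u w) (ψ : G₂ ≃g G₂) :
    (∃ lam : conormal G₁ G₂ ≃g conormal G₁ G₂,
        ∀ p : α × β, lam p = if p.1 = u then (u, ψ p.2) else p) ↔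
      ∀ h : β, G₂.neighborSet (ψ h) = G₂.neighborSet h := by
  constructor
  · rintro ⟨lam, hlam⟩
    obtain ⟨w, hwu, hnadj⟩ := hu
    have hlam_eq : ∀ p, fiberTwist u ψ.toEquiv p = lam p := fun p => by
      rw [hlam, fiberTwist_apply]; rfl
    refine neighborSet_eq_of_conormal_adj_fiberTwist_iff hwu hnadj fun x y => ?_
    rw [hlam_eq, hlam_eq]
    exact lam.map_adj_iff
  · intro hψ
    exact ⟨conormalFiberTwist G₁ u (σ := ψ.toEquiv) hψ, fiberTwist_apply u ψ.toEquiv⟩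

theorem conormal_aut_nondominating_iff_falseTwins {α β : Type*} [DecidableEq α]
    (G₁ : SimpleGraph α) (G₂ : SimpleGraph β) (u : α)
    (hu : ∃ w : α, w ≠ u ∧ ¬ G₁.Adj u w) (ψ : G₂ ≃g G₂) (hψ : ∃ h : β, ψ h ≠ h) :
    (∃ lam : conormal G₁ G₂ ≃g conormal G₁ G₂,
        ∀ p : α × β, lam p = if p.1 = u then (u, ψ p.2) else p) ↔
      ∀ h : β, G₂.neighborSet (ψ h) = G₂.neighborSet h :=
  conormal_aut_nondominating_iff_falseTwins_general G₁ G₂ u hu ψ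
end

section
/- Let g ≠ g' be dominating vertices of G₁ and h ≠ h' be dominating vertices of G₂. Then the map interchanging (g,h) and (g',h') while fixing all other vertices is an automorphism of G₁*G₂. -/
namespace SimpleGraph

variable {V : Type*} {G : SimpleGraph V}

def IsDominating (G : SimpleGraph V) (v : V) : Prop :=
  ∀ w, w ≠ v → G.Adj v w

section swap

variable [DecidableEq V] {a b : V}

/-- If an endpoint is sent to `a` or `b`, domination supplies the edge; otherwise both endpoints
are fixed by the swap. -/
lemma IsDominating.adj_swap (ha : G.IsDominating a) (hb : G.IsDominating b) {p q : V}
    (hpq : G.Adj p q) : G.Adj (Equiv.swap a b p) (Equiv.swap a b q) := by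
  set σ := Equiv.swap a b
  have hne : σ p ≠ σ q := σ.injective.ne hpq.ne
  by_cases hpa : σ p = a
  · exact hpa ▸ ha _ (hpa ▸ hne).symm
  by_cases hpb : σ p = b
  · exact hpb ▸ hb _ (hpb ▸ hne).symm
  by_cases hqa : σ q = a
  · exact (hqa ▸ ha _ (hqa ▸ hne)).symm
  by_cases hqb : σ q = b
  · exact (hqb ▸ hb _ (hqb ▸ hne)).symm
  have hp : σ p = p := by
    simpa only [σ, Equiv.swap_apply_self] using (Equiv.swap_apply_of_ne_of_ne hpa hpb).symm
  have hq : σ q = q := by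
    simpa only [σ, Equiv.swap_apply_self] using (Equiv.swap_apply_of_ne_of_ne hqa hqb).symm
  rwa [hp, hq]

def Iso.swapOfIsDominating (ha : G.IsDominating a) (hb : G.IsDominating b) : G ≃g G where
  toEquiv := Equiv.swap a b
  map_rel_iff' {p q} := by
    refine ⟨fun h => ?_, ha.adj_swap hb⟩
    simpa only [Equiv.swap_apply_self] using ha.adj_swap hb h

end swap

lemma IsDominating.conormal {W : Type*} {H : SimpleGraph W} {v : V} {w : W}
    (hv : G.IsDominating v) (hw : H.IsDominating w) : (conormal G H).IsDominating (v, w) := by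
  intro x hx
  refine ⟨hx.symm, ?_⟩
  by_cases h₁ : x.1 = v
  · exact Or.inr (hw _ fun h₂ => hx (Prod.ext h₁ h₂))
  · exact Or.inl (hv _ h₁)

end SimpleGraph

theorem conormal_interchange_dominating_general {α β : Type*} [DecidableEq α] [DecidableEq β]
    (G₁ : SimpleGraph α) (G₂ : SimpleGraph β) (g g' : α) (h h' : β)
    (hgdom : ∀ w : α, w ≠ g → G₁.Adj g w) (hg'dom : ∀ w : α, w ≠ g' → G₁.Adj g' w)
    (hhdom : ∀ w : β, w ≠ h → G₂.Adj h w) (hh'dom : ∀ w : β, w ≠ h' → G₂.Adj h' w) :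
    ∃ lam : conormal G₁ G₂ ≃g conormal G₁ G₂,
      ∀ p : α × β, lam p = Equiv.swap (g, h) (g', h') p :=
  ⟨.swapOfIsDominating (SimpleGraph.IsDominating.conormal hgdom hhdom)
    (SimpleGraph.IsDominating.conormal hg'dom hh'dom), fun _ => rfl⟩

theorem conormal_interchange_dominating {α β : Type*} [DecidableEq α] [DecidableEq β]
    (G₁ : SimpleGraph α) (G₂ : SimpleGraph β) (g g' : α) (h h' : β)
    (hg : g ≠ g') (hh : h ≠ h')
    (hgdom : ∀ w : α, w ≠ g → G₁.Adj g w) (hg'dom : ∀ w : α, w ≠ g' → G₁.Adj g' w)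
    (hhdom : ∀ w : β, w ≠ h → G₂.Adj h w) (hh'dom : ∀ w : β, w ≠ h' → G₂.Adj h' w) :
    ∃ lam : conormal G₁ G₂ ≃g conormal G₁ G₂,
      ∀ p : α × β, lam p = Equiv.swap (g, h) (g', h') p :=
  conormal_interchange_dominating_general G₁ G₂ g g' h h' hgdom hg'dom hhdom hh'dom
end

section
/- If A ⊆ V(G₁) is an equivalence class of false twins in G₁ and B ⊆ V(G₂) is an equivalence class of false twins in G₂, then A × B is contained in an equivalence class of false twins in G₁*G₂; in particular, any two distinct vertices of A × B are false twins in G₁*G₂. -/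
theorem conormal_falseTwins_prod {α β : Type*} (G₁ : SimpleGraph α) (G₂ : SimpleGraph β)
    (A : Set α) (B : Set β)
    (hA : ∃ a₀, A = {a : α | G₁.neighborSet a = G₁.neighborSet a₀})
    (hB : ∃ b₀, B = {b : β | G₂.neighborSet b = G₂.neighborSet b₀}) :
    ∀ p ∈ A ×ˢ B, ∀ q ∈ A ×ˢ B, p ≠ q →
      (conormal G₁ G₂).neighborSet p = (conormal G₁ G₂).neighborSet q := by
  obtain ⟨a₀, rfl⟩ := hA
  obtain ⟨b₀, rfl⟩ := hB
  rintro p ⟨hp1, hp2⟩ q ⟨hq1, hq2⟩ hpq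
  have h1 : G₁.neighborSet p.1 = G₁.neighborSet q.1 := hp1.trans hq1.symm
  have h2 : G₂.neighborSet p.2 = G₂.neighborSet q.2 := hp2.trans hq2.symm
  have adj1 : ∀ x, G₁.Adj p.1 x ↔ G₁.Adj q.1 x := by
    intro x
    have := Set.ext_iff.mp h1 x
    simpa [SimpleGraph.mem_neighborSet] using this
  have adj2 : ∀ x, G₂.Adj p.2 x ↔ G₂.Adj q.2 x := by
    intro x
    have := Set.ext_iff.mp h2 x
    simpa [SimpleGraph.mem_neighborSet] using this
  have npq1 : ¬ G₁.Adj p.1 q.1 := fun h => G₁.loopless.irrefl q.1 ((adj1 q.1).mp h)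
  have nqp1 : ¬ G₁.Adj q.1 p.1 := fun h => npq1 h.symm
  have npq2 : ¬ G₂.Adj p.2 q.2 := fun h => G₂.loopless.irrefl q.2 ((adj2 q.2).mp h)
  have nqp2 : ¬ G₂.Adj q.2 p.2 := fun h => npq2 h.symm
  ext x
  simp only [SimpleGraph.mem_neighborSet, conormal]
  constructor
  · rintro ⟨hne, h⟩
    refine ⟨?_, (h.imp (adj1 x.1).mp (adj2 x.2).mp)⟩
    rintro rfl
    exact h.elim npq1 npq2
  · rintro ⟨hne, h⟩
    refine ⟨?_, (h.imp (adj1 x.1).mpr (adj2 x.2).mpr)⟩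
    rintro rfl
    exact h.elim nqp1 nqp2
end

section
/- Let G₁ and G₂ be finite graphs whose vertex sets are each partitioned into equivalence classes of false twins, with G₁ having r classes and G₂ having s classes, and every class of size at least 2. Then fix(G₁*G₂) = |G₁|·|G₂| − r·s. In particular, for complete multipartite graphs G₁ = K_{k₁,…,k_r} and G₂ = K_{l₁,…,l_s} with all parts of size ≥ 2, fix(G₁*G₂) = |G₁|·|G₂| − rs. -/
/-- `F` is a fixing set of `G` if the identity is the only automorphism of `G`
fixing every vertex of `F`. -/
def IsFixingSet {V : Type*} (G : SimpleGraph V) (F : Set V) : Prop :=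
  ∀ e : G ≃g G, (∀ v ∈ F, e v = v) → ∀ v, e v = v

/-- The fixing number of a finite graph: the minimum size of a fixing set. -/
noncomputable def fixingNumber {V : Type*} [Fintype V] (G : SimpleGraph V) : ℕ :=
  sInf {n : ℕ | ∃ F : Finset V, F.card = n ∧ IsFixingSet G ↑F}

section Aux

variable {V : Type*} (G : SimpleGraph V)

section Swap
variable [DecidableEq V]

lemma twinSwap_nbhd {u v : V} (h : G.neighborSet u = G.neighborSet v) (x : V) :
    G.neighborSet (Equiv.swap u v x) = G.neighborSet x := by
  rcases eq_or_ne x u with rfl | hxu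
  · rw [Equiv.swap_apply_left, h]
  · rcases eq_or_ne x v with rfl | hxv
    · rw [Equiv.swap_apply_right, h]
    · rw [Equiv.swap_apply_of_ne_of_ne hxu hxv]

/-- Swapping two false twins is an automorphism. -/
def twinSwap {u v : V} (h : G.neighborSet u = G.neighborSet v) : G ≃g G where
  toEquiv := Equiv.swap u v
  map_rel_iff' := by
    intro a b
    have h1 : G.Adj (Equiv.swap u v a) (Equiv.swap u v b) ↔
        Equiv.swap u v b ∈ G.neighborSet (Equiv.swap u v a) := Iff.rfl
    rw [h1, twinSwap_nbhd G h a, SimpleGraph.mem_neighborSet, G.adj_comm,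
      ← SimpleGraph.mem_neighborSet, twinSwap_nbhd G h b, SimpleGraph.mem_neighborSet,
      G.adj_comm]

@[simp] lemma twinSwap_apply {u v : V} (h : G.neighborSet u = G.neighborSet v) (x : V) :
    twinSwap G h x = Equiv.swap u v x := rfl

end Swap

variable [Fintype V]

lemma fix_lower_bound (F : Finset V) (hF : IsFixingSet G ↑F) :
    Fintype.card V - Nat.card (Set.range G.neighborSet) ≤ F.card := by
  classical
  have hinj : Set.InjOn G.neighborSet ((↑F : Set V)ᶜ) := by
    intro v hv w hw hvw
    by_contra hne
    have hfix : ∀ x ∈ (↑F : Set V), twinSwap G hvw x = x := by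
      intro x hx
      have hxv : x ≠ v := fun hxv => hv (hxv ▸ hx)
      have hxw : x ≠ w := fun hxw => hw (hxw ▸ hx)
      rw [twinSwap_apply]
      exact Equiv.swap_apply_of_ne_of_ne hxv hxw
    have h2 := hF (twinSwap G hvw) hfix v
    rw [twinSwap_apply, Equiv.swap_apply_left] at h2
    exact hne h2.symm
  have hcard : Nat.card ((↑F : Set V)ᶜ : Set V) ≤ Nat.card (Set.range G.neighborSet) :=
    Nat.card_le_card_of_injective
      (fun x : ((↑F : Set V)ᶜ : Set V) => (⟨G.neighborSet x, Set.mem_range_self _⟩ :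
        Set.range G.neighborSet))
      (fun x y hxy => Subtype.ext (hinj x.2 y.2 (congrArg Subtype.val hxy)))
  have hcompl : Nat.card ((↑F : Set V)ᶜ : Set V) = Fintype.card V - F.card := by
    rw [Nat.card_eq_fintype_card, Fintype.card_compl_set]
    simp
  omega

lemma fix_upper_bound (h : ∀ v, ∃ v', v' ≠ v ∧ G.neighborSet v' = G.neighborSet v) :
    ∃ F : Finset V, F.card = Fintype.card V - Nat.card (Set.range G.neighborSet) ∧
      IsFixingSet G ↑F := by
  classical
  set N := G.neighborSet with hN
  set T : Set V := Set.range (Set.rangeSplitting N) with hT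
  have hTdet : ∀ t ∈ T, ∀ t' ∈ T, N t = N t' → t = t' := by
    rintro t ⟨s, rfl⟩ t' ⟨s', rfl⟩ hss
    have h1 : N (Set.rangeSplitting N s) = s := Set.apply_rangeSplitting N s
    have h2 : N (Set.rangeSplitting N s') = s' := Set.apply_rangeSplitting N s'
    have : s = s' := Subtype.ext (by rw [← h1, ← h2, hss])
    rw [this]
  refine ⟨(Set.toFinite Tᶜ).toFinset, ?_, ?_⟩
  · have hTcard : Nat.card T = Nat.card (Set.range N) :=
      Nat.card_range_of_injective (Set.rangeSplitting_injective N)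
    have h3 : (Set.toFinite Tᶜ).toFinset.card = Nat.card (Tᶜ : Set V) := by
      rw [Nat.card_coe_set_eq, Set.ncard_eq_toFinset_card _ (Set.toFinite Tᶜ)]
    rw [h3, Nat.card_eq_fintype_card, Fintype.card_compl_set, ← hTcard,
      Nat.card_eq_fintype_card]
  · intro e hfix
    have hfix' : ∀ v, v ∉ T → e v = v := by
      intro v hv
      exact hfix v (by simp [hv])
    intro v
    by_cases hv : v ∈ T
    · by_cases hev : e v ∈ T
      · have hadj : ∀ x, G.Adj (e v) x ↔ G.Adj v x := by
          have base : ∀ x, x ∉ T → (G.Adj (e v) x ↔ G.Adj v x) := by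
            intro x hx
            conv_lhs => rw [← hfix' x hx]
            exact e.map_adj_iff
          intro x
          by_cases hx : x ∈ T
          · obtain ⟨x', hx'ne, hx'N⟩ := h x
            have hx'T : x' ∉ T := fun hmem => hx'ne (hTdet x' hmem x hx hx'N)
            have h1 : G.Adj (e v) x ↔ G.Adj (e v) x' := by
              rw [G.adj_comm (e v) x, G.adj_comm (e v) x',
                ← SimpleGraph.mem_neighborSet, ← SimpleGraph.mem_neighborSet,
                ← hN, hx'N]
            have h2 : G.Adj v x ↔ G.Adj v x' := by
              rw [G.adj_comm v x, G.adj_comm v x',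
                ← SimpleGraph.mem_neighborSet, ← SimpleGraph.mem_neighborSet,
                ← hN, hx'N]
            rw [h1, h2]
            exact base x' hx'T
          · exact base x hx
        have hNN : N (e v) = N v := Set.ext fun x => hadj x
        exact hTdet (e v) hev v hv hNN
      · have := hfix' (e v) hev
        exact e.toEquiv.injective this
    · exact hfix' v hv

lemma fixingNumber_eq (h : ∀ v, ∃ v', v' ≠ v ∧ G.neighborSet v' = G.neighborSet v) :
    fixingNumber G = Fintype.card V - Nat.card (Set.range G.neighborSet) := by
  obtain ⟨F, hFcard, hFfix⟩ := fix_upper_bound G h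
  apply le_antisymm
  · exact Nat.sInf_le ⟨F, hFcard, hFfix⟩
  · have hne : {n : ℕ | ∃ F : Finset V, F.card = n ∧ IsFixingSet G ↑F}.Nonempty :=
      ⟨F.card, F, rfl, hFfix⟩
    obtain ⟨F', hF'card, hF'fix⟩ := Nat.sInf_mem hne
    rw [fixingNumber, ← hF'card]
    exact fix_lower_bound G F' hF'fix

end Aux

section Prod
variable {α β : Type*} (G₁ : SimpleGraph α) (G₂ : SimpleGraph β)

lemma conormal_neighborSet (a : α) (b : β) :
    (conormal G₁ G₂).neighborSet (a, b) =
      {p : α × β | p.1 ∈ G₁.neighborSet a ∨ p.2 ∈ G₂.neighborSet b} := by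
  ext ⟨x, y⟩
  have hiff : (conormal G₁ G₂).Adj (a, b) (x, y) ↔
      ((a, b) ≠ (x, y) ∧ (G₁.Adj a x ∨ G₂.Adj b y)) := Iff.rfl
  simp only [SimpleGraph.mem_neighborSet, Set.mem_setOf_eq, hiff]
  constructor
  · rintro ⟨_, h⟩; exact h
  · intro h
    refine ⟨?_, h⟩
    intro heq
    rcases h with h | h
    · exact G₁.ne_of_adj h (congrArg Prod.fst heq)
    · exact G₂.ne_of_adj h (congrArg Prod.snd heq)

lemma conormal_nbhd_eq_iff (a a' : α) (b b' : β) :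
    (conormal G₁ G₂).neighborSet (a, b) = (conormal G₁ G₂).neighborSet (a', b') ↔
      (G₁.neighborSet a = G₁.neighborSet a' ∧ G₂.neighborSet b = G₂.neighborSet b') := by
  rw [conormal_neighborSet, conormal_neighborSet]
  constructor
  · intro hset
    have hs := Set.ext_iff.mp hset
    constructor
    · ext x
      constructor
      · intro hx
        have := (hs (x, b')).mp (Or.inl hx)
        rcases this with h | h
        · exact h
        · exact absurd h (G₂.loopless.irrefl b')
      · intro hx
        have := (hs (x, b)).mpr (Or.inl hx)
        rcases this with h | h
        · exact h
        · exact absurd h (G₂.loopless.irrefl b)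
    · ext y
      constructor
      · intro hy
        have := (hs (a', y)).mp (Or.inr hy)
        rcases this with h | h
        · exact absurd h (G₁.loopless.irrefl a')
        · exact h
      · intro hy
        have := (hs (a, y)).mpr (Or.inr hy)
        rcases this with h | h
        · exact absurd h (G₁.loopless.irrefl a)
        · exact h
  · rintro ⟨h1, h2⟩
    rw [h1, h2]

lemma conormal_range_card :
    Nat.card (Set.range (conormal G₁ G₂).neighborSet) =
      Nat.card (Set.range G₁.neighborSet) * Nat.card (Set.range G₂.neighborSet) := by
  rw [← Nat.card_prod]
  apply Nat.card_eq_of_bijective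
    (fun S : Set.range (conormal G₁ G₂).neighborSet =>
      ((⟨G₁.neighborSet S.2.choose.1, Set.mem_range_self _⟩ : Set.range G₁.neighborSet),
       (⟨G₂.neighborSet S.2.choose.2, Set.mem_range_self _⟩ : Set.range G₂.neighborSet)))
  constructor
  · rintro ⟨S, hS⟩ ⟨S', hS'⟩ heq
    simp only [Prod.mk.injEq, Subtype.mk.injEq] at heq
    apply Subtype.ext
    show S = S'
    have hc : (conormal G₁ G₂).neighborSet hS.choose = S := hS.choose_spec
    have hc' : (conormal G₁ G₂).neighborSet hS'.choose = S' := hS'.choose_spec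
    rw [← hc, ← hc']
    have : (conormal G₁ G₂).neighborSet (hS.choose.1, hS.choose.2) =
        (conormal G₁ G₂).neighborSet (hS'.choose.1, hS'.choose.2) :=
      (conormal_nbhd_eq_iff G₁ G₂ _ _ _ _).mpr ⟨heq.1, heq.2⟩
    simpa using this
  · rintro ⟨⟨s, a, ha⟩, ⟨t, b, hb⟩⟩
    refine ⟨⟨(conormal G₁ G₂).neighborSet (a, b), Set.mem_range_self _⟩, ?_⟩
    have hS : ∃ p, (conormal G₁ G₂).neighborSet p = (conormal G₁ G₂).neighborSet (a, b) :=
      ⟨(a, b), rfl⟩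
    have hc := hS.choose_spec
    have : (conormal G₁ G₂).neighborSet (hS.choose.1, hS.choose.2) =
        (conormal G₁ G₂).neighborSet (a, b) := by simpa using hc
    obtain ⟨e1, e2⟩ := (conormal_nbhd_eq_iff G₁ G₂ _ _ _ _).mp this
    refine Prod.ext (Subtype.ext ?_) (Subtype.ext ?_)
    · exact e1.trans ha
    · exact e2.trans hb

end Prod

theorem fixingNumber_conormal_falseTwin_classes {α β : Type*} [Fintype α] [Fintype β]
    (G₁ : SimpleGraph α) (G₂ : SimpleGraph β)
    (h₁ : ∀ a : α, ∃ a' : α, a' ≠ a ∧ G₁.neighborSet a' = G₁.neighborSet a)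
    (h₂ : ∀ b : β, ∃ b' : β, b' ≠ b ∧ G₂.neighborSet b' = G₂.neighborSet b) :
    fixingNumber (conormal G₁ G₂) =
      Fintype.card α * Fintype.card β -
        Nat.card (Set.range G₁.neighborSet) * Nat.card (Set.range G₂.neighborSet) := by
  have htwin : ∀ p : α × β, ∃ p' : α × β, p' ≠ p ∧
      (conormal G₁ G₂).neighborSet p' = (conormal G₁ G₂).neighborSet p := by
    rintro ⟨a, b⟩
    obtain ⟨a', ha'ne, ha'⟩ := h₁ a
    refine ⟨(a', b), ?_, ?_⟩
    · intro heq
      exact ha'ne (congrArg Prod.fst heq)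
    · exact (conormal_nbhd_eq_iff G₁ G₂ _ _ _ _).mpr ⟨ha', rfl⟩
  rw [fixingNumber_eq _ htwin, conormal_range_card, Fintype.card_prod]
end
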